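/- ℙ¹-almost surely, on the event [ω(0) = 2 and S₁ = X₁], if the greedy walk (on the full configuration ω) returns to 0, i.e. T₀ < ∞, then there exists k ≥ 0 such that L_{k+1} > L₀ + L₁ + ⋯ + L_k. -/

import Mathlib

open scoped ENNReal

noncomputable section

/-- The number of points of a configuration `Xs ⊆ ℝ` lying in a window `A`. -/
def ptCount (Xs : Set ℝ) (A : Set ℝ) : ℕ := (Xs ∩ A).ncard

/-- `N` is a Poisson point process of intensity `c` (with respect to Lebesgue measure)
under the probability measure `P`: configurations are a.s. locally finite, the number of
points in any finite-volume measurable window is Poisson distributed with mean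
`c * volume A`, and the counts in pairwise disjoint windows are independent. -/
def IsPoissonPP {Ω : Type} [MeasurableSpace Ω] (P : MeasureTheory.Measure Ω)
    (N : Ω → Set ℝ) (c : ℝ) : Prop :=
  (∀ᵐ ωs ∂P, ∀ r : ℝ, (N ωs ∩ Set.Icc (-r) r).Finite) ∧
  (∀ A : Set ℝ, MeasurableSet A → Measurable fun ωs => ptCount (N ωs) A) ∧
  (∀ A : Set ℝ, MeasurableSet A → MeasureTheory.volume A ≠ ⊤ → ∀ n : ℕ,
      P {ωs | ptCount (N ωs) A = n} =
        ENNReal.ofReal (Real.exp (-(c * (MeasureTheory.volume A).toReal)) *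
          (c * (MeasureTheory.volume A).toReal) ^ n / n.factorial)) ∧
  (∀ (m : ℕ) (A : Fin m → Set ℝ), (∀ i, MeasurableSet (A i)) →
      Pairwise (Function.onFun Disjoint A) →
      ProbabilityTheory.iIndepFun
        (fun i ωs => ptCount (N ωs) (A i)) P)

/-- `(X, Y)` is a two-mark Poisson configuration of parameter `p` under `P`:
`X` is a Poisson point process of intensity `1` and `Y` is an independent `p`-thinning
of `X`.  Equivalently, `Y` (the doubly-marked points) and `X \ Y` (the singly-marked
points) are independent Poisson point processes of respective intensities `p` and `1-p`. -/
def IsTwoMarkPoisson {Ω : Type} [MeasurableSpace Ω] (P : MeasureTheory.Measure Ω)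
    (X Y : Ω → Set ℝ) (p : ℝ) : Prop :=
  (∀ ωs, Y ωs ⊆ X ωs) ∧
  IsPoissonPP P Y p ∧
  IsPoissonPP P (fun ωs => X ωs \ Y ωs) (1 - p) ∧
  (∀ (m : ℕ) (A : Fin m → Set ℝ), (∀ i, MeasurableSet (A i)) →
      Pairwise (Function.onFun Disjoint A) →
      ProbabilityTheory.iIndepFun
        (fun (k : Fin m × Bool) ωs =>
          ptCount (if k.2 then Y ωs else X ωs \ Y ωs) (A k.1)) P)

/-- The model of the paper, under the Palm measure `ℙ¹`:
* `X` is a Poisson point process of intensity `1` on `ℝ`, conditioned (in the Palm sense)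
  to have a point at the origin, and `Y ⊆ X` is an independent `p`-thinning of `X`;
  points of `Y` carry two marks and the remaining points of `X` carry one mark
  (field `marks x 0`).
* For every starting point `x ∈ X`, `S x` is the greedy walk started at `x`:
  `S x 0 = x`, the configuration evolves by `ω_{n+1} = ω_n - δ_{S_n}`, and `S x (n+1)`
  is (a.s.) the unique point `y ≠ S x n` carrying a mark in `ω_n` that is nearest
  to `S x n`.
* `Sp`/`marksp` is the analogous greedy walk run on the configuration
  `ω⁺ = ω` restricted to `(0,∞)` plus a single mark `δ₀` at the origin. -/
structure GreedyModel where
  Ω : Type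
  [mΩ : MeasurableSpace Ω]
  P : MeasureTheory.Measure Ω
  hprob : MeasureTheory.IsProbabilityMeasure P
  p : ℝ
  hp0 : 0 < p
  hp1 : p < 1
  X : Ω → Set ℝ
  Y : Ω → Set ℝ
  hYX : ∀ ωs, Y ωs ⊆ X ωs
  /-- Palm conditioning on `0 ∈ 𝒳`: there is a point at the origin. -/
  h0X : ∀ ωs, (0 : ℝ) ∈ X ωs
  /-- The point at the origin carries two marks with probability `p`. -/
  h0Y : P {ωs | (0 : ℝ) ∈ Y ωs} = ENNReal.ofReal p
  /-- Away from the origin, the configuration is a two-mark Poisson process. -/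
  hpoisson : IsTwoMarkPoisson P (fun ωs => X ωs \ {0}) (fun ωs => Y ωs \ {0}) p
  /-- The mark at the origin is independent of the rest of the configuration. -/
  hindep0 : ∀ (m : ℕ) (A : Fin m × Bool → Set ℝ), (∀ i, MeasurableSet (A i)) →
      ProbabilityTheory.IndepFun
        ({ωs | (0 : ℝ) ∈ Y ωs}.indicator fun _ => (1 : ℕ))
        (fun ωs (k : Fin m × Bool) =>
          ptCount (if k.2 then Y ωs \ {0} else X ωs \ (Y ωs ∪ {0})) (A k)) P
  /-- The greedy walk started at `x` and the associated evolving mark configurations. -/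
  S : ℝ → ℕ → Ω → ℝ
  marks : ℝ → ℕ → Ω → ℝ → ℕ
  /-- Initially, points of `Y` carry two marks, other points of `X` carry one. -/
  hmarks0 : ∀ x ωs z, marks x 0 ωs z = (X ωs).indicator 1 z + (Y ωs).indicator 1 z
  /-- `ω_{n+1} = ω_n - δ_{S_n}`. -/
  hmarksrec : ∀ x n ωs z,
      marks x (n + 1) ωs z = marks x n ωs z - ({S x n ωs} : Set ℝ).indicator 1 z
  /-- The walk started at a point `x` of `X` starts at `x` itself. -/
  hS0 : ∀ ωs, ∀ x ∈ X ωs, S x 0 ωs = x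
  hmeasS : ∀ x n, Measurable fun ωs => S x n ωs
  /-- Almost surely, for each starting point `x ∈ X`, the walk is well defined:
  `S x (n+1)` is a point distinct from `S x n`, still carrying a mark in `ω_n`, and
  strictly closer to `S x n` than any other such point. -/
  hwalk : ∀ᵐ ωs ∂P, ∀ x ∈ X ωs, ∀ n : ℕ,
      S x (n + 1) ωs ≠ S x n ωs ∧ 1 ≤ marks x n ωs (S x (n + 1) ωs) ∧
      ∀ z : ℝ, z ≠ S x n ωs → z ≠ S x (n + 1) ωs → 1 ≤ marks x n ωs z →
        |S x (n + 1) ωs - S x n ωs| < |z - S x n ωs|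
  /-- The greedy walk on `ω⁺`. -/
  Sp : ℕ → Ω → ℝ
  marksp : ℕ → Ω → ℝ → ℕ
  hmarksp0 : ∀ ωs z, marksp 0 ωs z =
      ({0} : Set ℝ).indicator 1 z +
        (Set.Ioi (0 : ℝ)).indicator
          (fun w => (X ωs).indicator 1 w + (Y ωs).indicator 1 w) z
  hmarksprec : ∀ n ωs z,
      marksp (n + 1) ωs z = marksp n ωs z - ({Sp n ωs} : Set ℝ).indicator 1 z
  hSp0 : ∀ ωs, Sp 0 ωs = 0
  hmeasSp : ∀ n, Measurable fun ωs => Sp n ωs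
  hwalkp : ∀ᵐ ωs ∂P, ∀ n : ℕ,
      Sp (n + 1) ωs ≠ Sp n ωs ∧ 1 ≤ marksp n ωs (Sp (n + 1) ωs) ∧
      ∀ z : ℝ, z ≠ Sp n ωs → z ≠ Sp (n + 1) ωs → 1 ≤ marksp n ωs z →
        |Sp (n + 1) ωs - Sp n ωs| < |z - Sp n ωs|

attribute [instance] GreedyModel.mΩ

/-- `T_A = inf {n ≥ 1 : S_n ∈ A}`, with value `∞` (in `ℕ∞`) if the walk never enters `A`. -/
def hitTime (S : ℕ → ℝ) (A : Set ℝ) : ℕ∞ :=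
  sInf ((fun n : ℕ => (n : ℕ∞)) '' {n : ℕ | 1 ≤ n ∧ S n ∈ A})

/-- The points `X₀ = 0 < X₁ < X₂ < ⋯` of the configuration `Xs` on `[0,∞)`:
`nthPoint Xs k` is `X_k`. -/
def nthPoint (Xs : Set ℝ) : ℕ → ℝ
  | 0 => 0
  | n + 1 => sInf (Xs ∩ Set.Ioi (nthPoint Xs n))

open Classical in
/-- The observable `𝓡_y` of the paper, for the walk `S` (with evolving marks `marks`)
and `y ∈ 𝒳 ∩ (0,∞)`.  It is `0` if `T_{ℝ₋} < T_y`; otherwise, labelling the set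
`𝒳_{T_y} ∩ [0,y]` of points still carrying a mark at time `T_y` as
`0 = z_n < ⋯ < z₁ < z₀ = y`, it is `max {y - z_j : y - z_j > 2 (y - z_{j-1})}`
(the predecessor `z_{j-1}` of a point `z_j` of the configuration being the `sInf` of the
part of the configuration strictly above `z_j`). -/
def RScript (marks : ℕ → ℝ → ℕ) (S : ℕ → ℝ) (y : ℝ) : ℝ :=
  if hitTime S (Set.Iio 0) < hitTime S {y} then 0
  else
    let Z : Set ℝ := {z : ℝ | 1 ≤ marks (hitTime S {y}).toNat z} ∩ Set.Icc 0 y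
    sSup {d : ℝ | ∃ z ∈ Z, d = y - z ∧ y - z > 2 * (y - sInf (Z ∩ Set.Ioi z))}


/-- The removal time `𝒯ᴿ_x = min {n ≥ 0 : ω⁺_{n+1}(x) = 0}` of the point `x` for the
greedy walk on `ω⁺` (with value `∞` if `x` is never cleared). -/
def TRtime (M : GreedyModel) (ωs : M.Ω) (x : ℝ) : ℕ∞ :=
  sInf ((fun n : ℕ => (n : ℕ∞)) '' {n : ℕ | M.marksp (n + 1) ωs x = 0})

/-- `ℓ(x) = max_{0 ≤ n ≤ 𝒯ᴿ_x} Sₙ - x`, the maximal displacement of the `ω⁺`-walk to the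
right of `x` up to the removal time of `x` (a junk value if `𝒯ᴿ_x = ∞`). -/
def ellReal (M : GreedyModel) (ωs : M.Ω) (x : ℝ) : ℝ :=
  sSup {d : ℝ | ∃ n : ℕ, n ≤ (TRtime M ωs x).toNat ∧ d = M.Sp n ωs - x}

/-- `ξ(x)`: the gap between `x + ℓ(x)` and the next point of `𝒳` strictly to its right. -/
def xiReal (M : GreedyModel) (ωs : M.Ω) (x : ℝ) : ℝ :=
  sInf (M.X ωs ∩ Set.Ioi (x + ellReal M ωs x)) - (x + ellReal M ωs x)

/-- `L(x) = ℓ(x) + ξ(x) ∈ [0,∞]`, with `L(x) = ∞` when `𝒯ᴿ_x = ∞`. -/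
def LGap (M : GreedyModel) (ωs : M.Ω) (x : ℝ) : ℝ≥0∞ :=
  if TRtime M ωs x < ⊤ then ENNReal.ofReal (ellReal M ωs x + xiReal M ωs x) else ⊤

/-- The renewal positions: `posSeq k = L₀ + L₁ + ⋯ + L_{k-1}` where `L₀ = L(0)` and
`L_{k+1} = L(L₀ + ⋯ + L_k)` (the recursion being stopped at the value `∞`). -/
def posSeq (M : GreedyModel) (ωs : M.Ω) : ℕ → ℝ≥0∞
  | 0 => 0
  | k + 1 =>
      if posSeq M ωs k < ⊤ then
        posSeq M ωs k + LGap M ωs (posSeq M ωs k).toReal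
      else ⊤

/-- The renewal lengths: `LSeq k = L_k = L(L₀ + ⋯ + L_{k-1})`. -/
def LSeq (M : GreedyModel) (ωs : M.Ω) (k : ℕ) : ℝ≥0∞ :=
  if posSeq M ωs k < ⊤ then LGap M ωs (posSeq M ωs k).toReal else ⊤

/-!
If the walk on `ω` returns to `0`, then up to the step before its return it coincides with the
walk on `ω⁺` (the second mark at `0` is the only difference), and at that time `m` the walk on
`ω⁺` sees no mark in `(0, 2 S_m]` other than at `S_m`, since otherwise it would not jump to `0`.

Suppose now that `L_{k+1} ≤ L₀ + ⋯ + L_k` for every `k`. Then every renewal position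
`x_k = L₀ + ⋯ + L_{k-1}` is the position of the walk on `ω⁺` at a sweep time, a time at which it
removes the last mark at its position while everything to its left is already cleared; the next
renewal position is the first point of `𝒳` beyond the explored region, and `x_{k+1} ≤ 2 x_k`.
The renewal positions are unbounded, so the first one beyond `S_m` lies in `(S_m, 2 S_m]`. It is
unmarked at time `m`, so it was swept before `m`, leaving `S_m` unmarked: but the walk on `ω⁺`
reached `S_m` at time `m`.
-/

open Set

def nextPoint (A : Set ℝ) (t : ℝ) : ℝ := sInf (A ∩ Ioi t)

theorem isLeast_nextPoint {A : Set ℝ} (hA : ∀ a b, (A ∩ Icc a b).Finite) {t : ℝ}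
    (hne : (A ∩ Ioi t).Nonempty) : IsLeast (A ∩ Ioi t) (nextPoint A t) := by
  obtain ⟨a, haA, hta⟩ := hne
  have hF : (A ∩ Ioc t a).Finite := (hA t a).subset (inter_subset_inter_right _ Ioc_subset_Icc_self)
  obtain ⟨hmA, hmt, hma⟩ := (show (A ∩ Ioc t a).Nonempty from ⟨a, haA, hta, le_rfl⟩).csInf_mem hF
  have hleast : IsLeast (A ∩ Ioi t) (sInf (A ∩ Ioc t a)) := by
    refine ⟨⟨hmA, hmt⟩, fun b ⟨hbA, hbt⟩ => ?_⟩
    rcases le_or_gt b a with hba | hab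
    · exact csInf_le hF.bddBelow ⟨hbA, hbt, hba⟩
    · exact hma.trans hab.le
  rwa [nextPoint, hleast.csInf_eq]

theorem StrictMono.exists_gt_of_mem {A : Set ℝ} (hA : ∀ a b, (A ∩ Icc a b).Finite) {f : ℕ → ℝ}
    (hf : StrictMono f) (hfA : ∀ k, f k ∈ A) (B : ℝ) : ∃ k, B < f k := by
  by_contra! hB
  refine infinite_range_of_injective hf.injective ((hA (f 0) B).subset ?_)
  rintro _ ⟨k, rfl⟩
  exact ⟨hfA k, hf.monotone k.zero_le, hB k⟩

section Poisson

open MeasureTheory Filter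

variable {Ω : Type} [MeasurableSpace Ω] {P : Measure Ω} {N : Ω → Set ℝ} {c : ℝ}

theorem IsPoissonPP.measure_ptCount_eq_zero (hN : IsPoissonPP P N c) {A : Set ℝ}
    (hA : MeasurableSet A) (hA' : volume A ≠ ⊤) :
    P {ω | ptCount (N ω) A = 0} = ENNReal.ofReal (Real.exp (-(c * (volume A).toReal))) := by
  simpa using hN.2.2.1 A hA hA' 0

theorem IsPoissonPP.ae_nonempty_inter_Ioi (hN : IsPoissonPP P N c) (hc : 0 < c) :
    ∀ᵐ ω ∂P, ∀ t : ℝ, (N ω ∩ Ioi t).Nonempty := by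
  have hexp : Tendsto (fun n : ℕ => ENNReal.ofReal (Real.exp (-(c * n)))) atTop (nhds 0) := by
    simpa using ENNReal.tendsto_ofReal (Real.tendsto_exp_atBot.comp
      (tendsto_neg_atTop_atBot.comp (tendsto_natCast_atTop_atTop.const_mul_atTop hc)))
  have hq : ∀ q : ℤ, ∀ᵐ ω ∂P, ∃ n : ℕ, (N ω ∩ Ioc (q : ℝ) (q + n)).Nonempty := by
    intro q
    rw [ae_iff]
    refine le_antisymm (ge_of_tendsto' hexp fun n => ?_) bot_le
    have hvol : volume (Ioc (q : ℝ) (q + n)) = ENNReal.ofReal n := by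
      rw [Real.volume_Ioc, add_sub_cancel_left]
    calc P {ω | ¬∃ n : ℕ, (N ω ∩ Ioc (q : ℝ) (q + n)).Nonempty}
        ≤ P {ω | ptCount (N ω) (Ioc (q : ℝ) (q + n)) = 0} := by
          refine measure_mono fun ω hω => ?_
          simp only [not_exists, not_nonempty_iff_eq_empty, mem_ofPred_eq] at hω ⊢
          rw [ptCount, hω n, ncard_empty]
      _ = ENNReal.ofReal (Real.exp (-(c * n))) := by
          rw [hN.measure_ptCount_eq_zero measurableSet_Ioc (by simp [hvol]), hvol,
            ENNReal.toReal_ofReal n.cast_nonneg]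
  filter_upwards [ae_all_iff.2 hq] with ω hω t
  obtain ⟨q, hq⟩ := exists_int_gt t
  obtain ⟨n, x, hx, hqx, -⟩ := hω q
  exact ⟨x, hx, hq.trans hqx⟩

end Poisson

/-- `s n` is the position and `μ n z` the number of marks at `z` of the configuration `ω_n`. -/
structure IsGreedyWalk (s : ℕ → ℝ) (μ : ℕ → ℝ → ℕ) : Prop where
  marks_succ : ∀ n z, μ (n + 1) z = μ n z - ({s n} : Set ℝ).indicator 1 z
  succ_ne : ∀ n, s (n + 1) ≠ s n
  one_le_marks_succ : ∀ n, 1 ≤ μ n (s (n + 1))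
  nearest : ∀ n z, z ≠ s n → z ≠ s (n + 1) → 1 ≤ μ n z → |s (n + 1) - s n| < |z - s n|

namespace IsGreedyWalk

variable {s : ℕ → ℝ} {μ : ℕ → ℝ → ℕ} {n : ℕ} {z : ℝ}

theorem marks_succ_of_ne (hw : IsGreedyWalk s μ) (hz : z ≠ s n) : μ (n + 1) z = μ n z := by
  rw [hw.marks_succ, indicator_of_notMem (by simpa using hz), Nat.sub_zero]

theorem marks_succ_self (hw : IsGreedyWalk s μ) (n : ℕ) : μ (n + 1) (s n) = μ n (s n) - 1 := by
  rw [hw.marks_succ, indicator_of_mem (mem_singleton _)]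
  rfl

theorem marks_antitone (hw : IsGreedyWalk s μ) (z : ℝ) : Antitone (μ · z) :=
  antitone_nat_of_succ_le fun n => by rw [hw.marks_succ]; exact Nat.sub_le _ _

theorem one_le_marks_zero (hw : IsGreedyWalk s μ) (h : 1 ≤ μ n z) : 1 ≤ μ 0 z :=
  h.trans (hw.marks_antitone z n.zero_le)

theorem marks_eq_marks_zero (hw : IsGreedyWalk s μ) (h : ∀ j < n, s j ≠ z) : μ n z = μ 0 z := by
  induction n with
  | zero => rfl
  | succ n ih =>
    rw [hw.marks_succ_of_ne (h n n.lt_succ_self).symm]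
    exact ih fun j hj => h j (hj.trans n.lt_succ_self)

theorem eq_of_marks_succ_ne (hw : IsGreedyWalk s μ) (h : μ (n + 1) z ≠ μ n z) : s n = z := by
  by_contra hne
  exact h (hw.marks_succ_of_ne (Ne.symm hne))

theorem eq_find_of_marks (hw : IsGreedyWalk s μ) (hz : 1 ≤ μ 0 z)
    (hex : ∃ n, μ (n + 1) z = 0) : s (Nat.find hex) = z := by
  refine hw.eq_of_marks_succ_ne ?_
  rw [Nat.find_spec hex]
  intro h0
  rcases hfind : Nat.find hex with _ | k
  · rw [hfind] at h0
    omega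
  · rw [hfind] at h0
    exact Nat.find_min hex (by omega) h0.symm

theorem succ_le_of_lt (hw : IsGreedyWalk s μ) (hlt : s n < z) (hz : 1 ≤ μ n z) :
    s (n + 1) ≤ z := by
  by_contra! h
  have := hw.nearest n z hlt.ne' h.ne hz
  rw [abs_of_pos (by linarith), abs_of_pos (by linarith)] at this
  linarith

theorem le_succ_of_lt (hw : IsGreedyWalk s μ) (hlt : z < s n) (hz : 1 ≤ μ n z) :
    z ≤ s (n + 1) := by
  by_contra! h
  have := hw.nearest n z hlt.ne h.ne' hz
  rw [abs_of_neg (by linarith), abs_of_neg (by linarith)] at this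
  linarith

theorem one_le_marks_self (hw : IsGreedyWalk s μ) (h0 : 1 ≤ μ 0 (s 0)) : ∀ n, 1 ≤ μ n (s n)
  | 0 => h0
  | n + 1 => by rw [hw.marks_succ_of_ne (hw.succ_ne n)]; exact hw.one_le_marks_succ n

theorem marks_le_one_of_lt (hw : IsGreedyWalk s μ) (h2 : ∀ z, μ 0 z ≤ 2) {j : ℕ} (hj : j < n) :
    μ n (s j) ≤ 1 := by
  have h1 := hw.marks_succ_self j
  have h2j := (hw.marks_antitone (s j) j.zero_le).trans (h2 (s j))
  have hn := hw.marks_antitone (s j) (show j + 1 ≤ n from hj)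
  simp only at h2j hn
  omega

-- No point beyond the running maximum has been visited, so all of them keep their marks.
theorem isLeast_of_partialSups_lt (hw : IsGreedyWalk s μ) (h : partialSups s n < s (n + 1)) :
    IsLeast ({z | 1 ≤ μ 0 z} ∩ Ioi (partialSups s n)) (s (n + 1)) := by
  refine ⟨⟨hw.one_le_marks_zero (hw.one_le_marks_succ n), h⟩, ?_⟩
  rintro z ⟨hz, hzgt⟩
  have hzn : 1 ≤ μ n z := by
    rwa [hw.marks_eq_marks_zero fun j hj =>
      ((le_partialSups_of_le s hj.le).trans_lt hzgt).ne]
  exact hw.succ_le_of_lt ((le_partialSups_of_le s le_rfl).trans_lt hzgt) hzn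

theorem exists_eq_of_le_partialSups (hw : IsGreedyWalk s μ) (hz : 1 ≤ μ 0 z) (h0 : s 0 ≤ z) :
    ∀ n, z ≤ partialSups s n → ∃ j ≤ n, s j = z
  | 0, h => ⟨0, le_rfl, le_antisymm h0 (by simpa using h)⟩
  | n + 1, h => by
    by_cases hn : z ≤ partialSups s n
    · obtain ⟨j, hj, rfl⟩ := hw.exists_eq_of_le_partialSups hz h0 n hn
      exact ⟨j, hj.trans n.le_succ, rfl⟩
    · push Not at hn
      rw [partialSups_add_one, le_sup_iff] at h
      have hrec : partialSups s n < s (n + 1) := hn.trans_le (h.resolve_left hn.not_ge)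
      exact ⟨n + 1, le_rfl, le_antisymm ((hw.isLeast_of_partialSups_lt hrec).2 ⟨hz, hn⟩)
        (h.resolve_left hn.not_ge)⟩

theorem cleared_left_succ (hw : IsGreedyWalk s μ) (hcl : ∀ z < s n, μ n z = 0)
    (h1 : μ n (s n) ≤ 1) : s n < s (n + 1) ∧ ∀ z < s (n + 1), μ (n + 1) z = 0 := by
  have hlt : s n < s (n + 1) := by
    refine lt_of_le_of_ne (not_lt.1 fun h => ?_) (hw.succ_ne n).symm
    have := hw.one_le_marks_succ n
    rw [hcl _ h] at this
    omega
  refine ⟨hlt, fun z hz => ?_⟩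
  rcases lt_trichotomy z (s n) with h | rfl | h
  · rw [hw.marks_succ_of_ne h.ne]
    exact hcl z h
  · rw [hw.marks_succ_self]
    omega
  · rw [hw.marks_succ_of_ne h.ne']
    by_contra hm
    exact (hw.succ_le_of_lt h (by omega)).not_gt hz

end IsGreedyWalk

structure IsSweepTime (s : ℕ → ℝ) (μ : ℕ → ℝ → ℕ) (T : ℕ) : Prop where
  start_le : s 0 ≤ s T
  left_cleared : ∀ z < s T, μ T z = 0
  self_cleared : μ (T + 1) (s T) = 0

namespace IsSweepTime

variable {s : ℕ → ℝ} {μ : ℕ → ℝ → ℕ} {m n T : ℕ} {r z : ℝ}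

theorem marks_le_one (hw : IsGreedyWalk s μ) (h2 : ∀ z, μ 0 z ≤ 2)
    (hT : IsSweepTime s μ T) (hn : T ≤ n) (hz : z ≤ partialSups s T) : μ n z ≤ 1 := by
  refine (hw.marks_antitone z hn).trans ?_
  rcases lt_trichotomy z (s T) with h | rfl | h
  · simp [hT.left_cleared z h]
  · have := hw.marks_succ_self T
    rw [hT.self_cleared] at this
    simp only
    omega
  · by_cases hm : 1 ≤ μ T z
    · obtain ⟨j, hj, rfl⟩ :=
        hw.exists_eq_of_le_partialSups (hw.one_le_marks_zero hm) (hT.start_le.trans h.le) T hz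
      exact hw.marks_le_one_of_lt h2 (lt_of_le_of_ne hj (by rintro rfl; exact h.ne' rfl))
    · simp only
      omega

theorem cleared_left_before_visit (hw : IsGreedyWalk s μ) (h2 : ∀ z, μ 0 z ≤ 2)
    (hT : IsSweepTime s μ T) (hr : IsLeast ({z | 1 ≤ μ 0 z} ∩ Ioi (partialSups s T)) r) :
    ∀ n, T ≤ n → (∀ j, T < j → j ≤ n → s j ≠ r) →
      partialSups s n = partialSups s T ∧ ∀ z < s n, μ n z = 0 := by
  intro n hn
  induction n, hn using Nat.le_induction with
  | base => exact fun _ => ⟨rfl, hT.left_cleared⟩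
  | succ n hn ih =>
    intro hne
    obtain ⟨hps, hcl⟩ := ih fun j hj hjn => hne j hj (hjn.trans n.le_succ)
    have hle : s (n + 1) ≤ partialSups s T := by
      by_contra! h
      rw [← hps] at h
      exact hne (n + 1) (Nat.lt_succ_of_le hn) le_rfl
        ((hw.isLeast_of_partialSups_lt h).unique (hps ▸ hr))
    refine ⟨by rw [partialSups_add_one, hps, sup_eq_left.2 hle], ?_⟩
    exact (hw.cleared_left_succ hcl
      (hT.marks_le_one hw h2 hn (hps ▸ le_partialSups_of_le s le_rfl))).2

theorem next (hw : IsGreedyWalk s μ) (h2 : ∀ z, μ 0 z ≤ 2) (hT : IsSweepTime s μ T)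
    (hr : IsLeast ({z | 1 ≤ μ 0 z} ∩ Ioi (partialSups s T)) r) {T' : ℕ} (hTT' : T < T')
    (hs : s T' = r) (hcl : μ (T' + 1) r = 0) : IsSweepTime s μ T' := by
  classical
  have hex : ∃ j, T < j ∧ s j = r := ⟨T', hTT', hs⟩
  obtain ⟨hTv, hsv⟩ := Nat.find_spec hex
  obtain ⟨u, hu⟩ := Nat.exists_eq_add_one.2 (show 0 < Nat.find hex by omega)
  have hTu : T ≤ u := by omega
  obtain ⟨hps, hclu⟩ := hT.cleared_left_before_visit hw h2 hr u hTu
    fun j hj hju hsj => Nat.find_min hex (by omega) ⟨hj, hsj⟩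
  have hvisit := (hw.cleared_left_succ hclu
    (hT.marks_le_one hw h2 hTu (hps ▸ le_partialSups_of_le s le_rfl))).2
  rw [← hu, hsv] at hvisit
  refine ⟨?_, fun z hz => ?_, hs ▸ hcl⟩
  · rw [hs]
    exact hT.start_le.trans ((le_partialSups_of_le s le_rfl).trans hr.1.2.le)
  · rw [hs] at hz
    exact Nat.eq_zero_of_le_zero
      ((hw.marks_antitone z (Nat.find_min' hex ⟨hTT', hs⟩)).trans (hvisit z hz).le)

theorem le_of_marks_eq_zero (hw : IsGreedyWalk s μ) (h0 : 1 ≤ μ 0 (s 0))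
    (hT : IsSweepTime s μ T) (hm : 1 ≤ m) (hcl : μ m (s T) = 0) : s T ≤ s m := by
  have hTm : T < m := by
    by_contra! h
    have h1 := (hw.one_le_marks_self h0 T).trans (hw.marks_antitone (s T) h)
    simp only [hcl] at h1
    omega
  obtain ⟨k, rfl⟩ := Nat.exists_eq_add_one.2 hm
  by_contra! h
  have h1 := (hw.one_le_marks_succ k).trans (hw.marks_antitone (s (k + 1)) (by omega : T ≤ k))
  simp only [hT.left_cleared _ h] at h1
  omega

end IsSweepTime

namespace IsGreedyWalk

variable {s s' : ℕ → ℝ} {μ μ' : ℕ → ℝ → ℕ} {n : ℕ}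

theorem pos_of_marks_zero (hw : IsGreedyWalk s μ) (hs0 : s 0 = 0) (h0 : μ 0 0 = 1)
    (hneg : ∀ z < 0, μ 0 z = 0) (hn : 1 ≤ n) : 0 < s n := by
  obtain ⟨k, rfl⟩ := Nat.exists_eq_add_one.2 hn
  have hm := hw.one_le_marks_succ k
  have hnn : 0 ≤ s (k + 1) := not_lt.1 fun h => by
    have := hm.trans (hw.marks_antitone _ k.zero_le)
    simp only [hneg _ h] at this
    omega
  refine lt_of_le_of_ne hnn fun h => ?_
  rcases k with _ | k
  · exact hw.succ_ne 0 (h.symm.trans hs0.symm)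
  · have h10 := hw.marks_succ_self 0
    rw [hs0, h0] at h10
    have := hm.trans (hw.marks_antitone _ (Nat.succ_le_succ k.zero_le))
    simp only [← h, h10] at this
    omega

theorem pos_of_forall_ne_zero (hw : IsGreedyWalk s μ) (hs0 : s 0 = 0) (h0 : μ 0 0 = 2)
    (hs1 : 0 < s 1) : ∀ n, 1 ≤ n → (∀ j, 1 ≤ j → j ≤ n → s j ≠ 0) → 0 < s n ∧ μ n 0 = 1 := by
  intro n hn
  induction n, hn using Nat.le_induction with
  | base =>
    intro _
    have h10 := hw.marks_succ_self 0
    rw [hs0, h0] at h10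
    exact ⟨hs1, h10⟩
  | succ n hn ih =>
    intro hne
    obtain ⟨hpos, h1⟩ := ih fun j hj hjn => hne j hj (hjn.trans n.le_succ)
    refine ⟨lt_of_le_of_ne (hw.le_succ_of_lt hpos h1.ge) (hne (n + 1) (by omega) le_rfl).symm, ?_⟩
    rw [hw.marks_succ_of_ne hpos.ne, h1]

theorem eq_of_marks_eqOn_Ioi (hw : IsGreedyWalk s μ) (hw' : IsGreedyWalk s' μ') (h0 : s 0 = s' 0)
    (hμ : ∀ z, 0 < z → μ 0 z = μ' 0 z) :
    ∀ n, (∀ j, 1 ≤ j → j ≤ n → 0 < s j ∧ 0 < s' j) →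
      s n = s' n ∧ ∀ z, 0 < z → μ n z = μ' n z := by
  intro n
  induction n with
  | zero => exact fun _ => ⟨h0, hμ⟩
  | succ n ih =>
    intro hpos
    obtain ⟨hs, hμn⟩ := ih fun j hj hjn => hpos j hj (hjn.trans n.le_succ)
    obtain ⟨hp, hp'⟩ := hpos (n + 1) (by omega) le_rfl
    have heq : s (n + 1) = s' (n + 1) := by
      by_contra hne
      have h1 := hw.nearest n (s' (n + 1)) (by rw [hs]; exact hw'.succ_ne n) (Ne.symm hne)
        (by rw [hμn _ hp']; exact hw'.one_le_marks_succ n)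
      have h2 := hw'.nearest n (s (n + 1)) (by rw [← hs]; exact hw.succ_ne n) hne
        (by rw [← hμn _ hp]; exact hw.one_le_marks_succ n)
      rw [hs] at h1
      linarith
    refine ⟨heq, fun z hz => ?_⟩
    rw [hw.marks_succ, hw'.marks_succ, hμn z hz, hs]

-- The two walks agree until the first one returns to `0`, which it does from `s' m` only if no
-- marked point is closer to `s' m` than `0`.
theorem exists_cleared_window (hw : IsGreedyWalk s μ) (hw' : IsGreedyWalk s' μ')
    (hs0 : s 0 = 0) (hs0' : s' 0 = 0) (hμ : ∀ z, 0 < z → μ 0 z = μ' 0 z) (h0 : μ 0 0 = 2)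
    (h0' : μ' 0 0 = 1) (hneg' : ∀ z < 0, μ' 0 z = 0) (hs1 : 0 < s 1)
    (hret : ∃ n, 1 ≤ n ∧ s n = 0) :
    ∃ m, 1 ≤ m ∧ 0 < s' m ∧ ∀ z, 0 < z → z ≤ 2 * s' m → z ≠ s' m → μ' m z = 0 := by
  classical
  obtain ⟨hn1, hret0⟩ := Nat.find_spec hret
  obtain ⟨m, hm⟩ := Nat.exists_eq_add_one.2 (show 0 < Nat.find hret by omega)
  have hm1 : 1 ≤ m := by
    by_contra! h
    rw [show m = 0 by omega] at hm
    rw [hm] at hret0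
    exact hs1.ne' hret0
  have hne : ∀ j, 1 ≤ j → j ≤ m → s j ≠ 0 := fun j hj hjm hsj =>
    Nat.find_min hret (by omega) ⟨hj, hsj⟩
  have hpos := fun j hj hjm => (hw.pos_of_forall_ne_zero hs0 h0 hs1 j hj
    fun i hi hij => hne i hi (hij.trans hjm)).1
  obtain ⟨hsm, hμm⟩ := hw.eq_of_marks_eqOn_Ioi hw' (hs0.trans hs0'.symm) hμ m
    fun j hj hjm => ⟨hpos j hj hjm, hw'.pos_of_marks_zero hs0' h0' hneg' hj⟩
  refine ⟨m, hm1, hsm ▸ hpos m hm1 le_rfl, fun z hz hz2 hzm => ?_⟩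
  rw [← hsm] at hz2 hzm
  rw [← hμm z hz]
  by_contra hmz
  have hsucc : s (m + 1) = 0 := hm ▸ hret0
  have := hw.nearest m z hzm (by rw [hsucc]; exact hz.ne') (by omega)
  rw [hsucc, zero_sub, abs_neg, abs_of_pos (hpos m hm1 le_rfl), lt_abs] at this
  rcases this with h | h <;> linarith

end IsGreedyWalk

namespace GreedyModel

variable {M : GreedyModel} {w : M.Ω} {k m T : ℕ} {z : ℝ}

theorem marksp_zero_zero : M.marksp 0 w 0 = 1 := by
  simp [M.hmarksp0]

theorem marksp_zero_of_neg (hz : z < 0) : M.marksp 0 w z = 0 := by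
  simp [M.hmarksp0, hz.ne, hz.le]

theorem marksp_zero_le_two (z : ℝ) : M.marksp 0 w z ≤ 2 := by
  by_cases hX : z ∈ M.X w <;> by_cases hY : z ∈ M.Y w <;>
    simp [M.hmarksp0, indicator_apply, hX, hY] <;> split_ifs <;> simp_all

theorem one_le_marksp_zero_iff (hz : 0 < z) : 1 ≤ M.marksp 0 w z ↔ z ∈ M.X w := by
  by_cases hX : z ∈ M.X w <;> by_cases hY : z ∈ M.Y w <;>
    simp [M.hmarksp0, hz, hz.ne', hX, hY]
  exact hX (M.hYX w hY)

theorem marks_zero_eq_marksp_zero (hz : 0 < z) : M.marks 0 0 w z = M.marksp 0 w z := by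
  simp [M.hmarks0, M.hmarksp0, hz.ne', hz]

theorem marks_zero_zero (h0Y : (0 : ℝ) ∈ M.Y w) : M.marks 0 0 w 0 = 2 := by
  simp [M.hmarks0, M.h0X w, h0Y]

structure IsGood (M : GreedyModel) (w : M.Ω) : Prop where
  finite_inter_Icc : ∀ a b, (M.X w ∩ Icc a b).Finite
  nonempty_inter_Ioi : ∀ t, (M.X w ∩ Ioi t).Nonempty
  walk : IsGreedyWalk (M.S 0 · w) (M.marks 0 · w)
  walkp : IsGreedyWalk (M.Sp · w) (M.marksp · w)

theorem ae_isGood (M : GreedyModel) : ∀ᵐ w ∂M.P, M.IsGood w := by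
  obtain ⟨-, hY, hXY, -⟩ := M.hpoisson
  filter_upwards [hY.1, hXY.1, hY.ae_nonempty_inter_Ioi M.hp0, M.hwalk, M.hwalkp]
    with w hYfin hXYfin hYne hwalk hwalkp
  refine ⟨fun a b => ?_, fun t => ?_, ?_, ?_⟩
  · set r := |a| + |b|
    refine (((hYfin r).union (hXYfin r)).insert 0).subset ?_
    rintro z ⟨hzX, hza, hzb⟩
    have hzr : z ∈ Icc (-r) r := ⟨by linarith [neg_abs_le a, abs_nonneg b],
      by linarith [le_abs_self b, abs_nonneg a]⟩
    by_cases hz0 : z = 0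
    · exact Or.inl hz0
    · by_cases hzY : z ∈ M.Y w
      · exact Or.inr (Or.inl ⟨⟨hzY, hz0⟩, hzr⟩)
      · exact Or.inr (Or.inr ⟨⟨⟨hzX, hz0⟩, fun h => hzY h.1⟩, hzr⟩)
  · obtain ⟨z, ⟨hzY, -⟩, hzt⟩ := hYne t
    exact ⟨z, M.hYX w hzY, hzt⟩
  · have h := hwalk 0 (M.h0X w)
    exact ⟨fun n => M.hmarksrec 0 n w, fun n => (h n).1, fun n => (h n).2.1, fun n => (h n).2.2⟩
  · exact ⟨fun n => M.hmarksprec n w, fun n => (hwalkp n).1, fun n => (hwalkp n).2.1,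
      fun n => (hwalkp n).2.2⟩

theorem marked_inter_Ioi {t : ℝ} (ht : 0 ≤ t) :
    {z | 1 ≤ M.marksp 0 w z} ∩ Ioi t = M.X w ∩ Ioi t := by
  ext z
  exact and_congr_left fun hz => one_le_marksp_zero_iff (ht.trans_lt hz)

theorem Sp_nonneg (hT : IsSweepTime (M.Sp · w) (M.marksp · w) T) : 0 ≤ M.Sp T w :=
  M.hSp0 w ▸ hT.start_le

theorem partialSups_Sp_nonneg (hT : IsSweepTime (M.Sp · w) (M.marksp · w) T) :
    0 ≤ partialSups (M.Sp · w) T :=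
  (Sp_nonneg hT).trans (le_partialSups_of_le (M.Sp · w) le_rfl)

namespace IsGood

theorem isLeast_nextPoint (hG : M.IsGood w) (t : ℝ) :
    IsLeast (M.X w ∩ Ioi t) (nextPoint (M.X w) t) :=
  _root_.isLeast_nextPoint hG.finite_inter_Icc (hG.nonempty_inter_Ioi t)

theorem Sp_lt_nextPoint (hG : M.IsGood w) (T : ℕ) :
    M.Sp T w < nextPoint (M.X w) (partialSups (M.Sp · w) T) :=
  (le_partialSups_of_le (M.Sp · w) le_rfl).trans_lt (hG.isLeast_nextPoint _).1.2

theorem one_le_marksp_self (hG : M.IsGood w) (n : ℕ) : 1 ≤ M.marksp n w (M.Sp n w) :=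
  hG.walkp.one_le_marks_self (by simp [M.hSp0, marksp_zero_zero]) n

theorem isSweepTime_zero (hG : M.IsGood w) : IsSweepTime (M.Sp · w) (M.marksp · w) 0 where
  start_le := le_rfl
  left_cleared z hz := marksp_zero_of_neg (M.hSp0 w ▸ hz)
  self_cleared := by
    rw [hG.walkp.marks_succ_self]
    simp [M.hSp0, marksp_zero_zero]

theorem TRtime_Sp (hG : M.IsGood w) (hT : M.marksp (T + 1) w (M.Sp T w) = 0) :
    TRtime M w (M.Sp T w) = T := by
  refine IsLeast.csInf_eq ⟨⟨T, hT, rfl⟩, ?_⟩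
  rintro _ ⟨j, hj, rfl⟩
  by_contra! hjT
  have h := (hG.one_le_marksp_self T).trans
    (hG.walkp.marks_antitone _ (show j + 1 ≤ T by exact_mod_cast hjT))
  simp only [mem_ofPred_eq] at hj
  simp only [hj] at h
  omega

theorem LGap_Sp (hG : M.IsGood w) (hT : M.marksp (T + 1) w (M.Sp T w) = 0) :
    LGap M w (M.Sp T w) =
      ENNReal.ofReal (nextPoint (M.X w) (partialSups (M.Sp · w) T) - M.Sp T w) := by
  have hTR := hG.TRtime_Sp hT
  have hell : ellReal M w (M.Sp T w) = partialSups (M.Sp · w) T - M.Sp T w := by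
    rw [ellReal, hTR, ENat.toNat_natCast]
    refine IsGreatest.csSup_eq ⟨?_, ?_⟩
    · obtain ⟨j, hj, hj'⟩ := exists_partialSups_eq (M.Sp · w) T
      exact ⟨j, hj, by rw [hj']⟩
    · rintro _ ⟨j, hj, rfl⟩
      exact sub_le_sub_right (le_partialSups_of_le (M.Sp · w) hj) _
  rw [LGap, if_pos (by rw [hTR]; exact ENat.natCast_lt_top T), xiReal, hell, add_sub_cancel]
  congr 1
  rw [nextPoint]
  ring

theorem posSeq_succ_eq (hG : M.IsGood w) (hT : IsSweepTime (M.Sp · w) (M.marksp · w) T)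
    (hk : posSeq M w k = ENNReal.ofReal (M.Sp T w)) :
    posSeq M w (k + 1) = ENNReal.ofReal (nextPoint (M.X w) (partialSups (M.Sp · w) T)) := by
  rw [posSeq, if_pos (hk ▸ ENNReal.ofReal_lt_top), hk, ENNReal.toReal_ofReal (Sp_nonneg hT),
    hG.LGap_Sp hT.self_cleared,
    ← ENNReal.ofReal_add (Sp_nonneg hT) (sub_nonneg.2 (hG.Sp_lt_nextPoint T).le), add_sub_cancel]

theorem LSeq_eq (hG : M.IsGood w) (hT : IsSweepTime (M.Sp · w) (M.marksp · w) T)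
    (hk : posSeq M w k = ENNReal.ofReal (M.Sp T w)) :
    LSeq M w k = ENNReal.ofReal (nextPoint (M.X w) (partialSups (M.Sp · w) T) - M.Sp T w) := by
  rw [LSeq, if_pos (hk ▸ ENNReal.ofReal_lt_top), hk, ENNReal.toReal_ofReal (Sp_nonneg hT),
    hG.LGap_Sp hT.self_cleared]

theorem exists_isSweepTime (hG : M.IsGood w) (H : ∀ k, LSeq M w (k + 1) ≤ posSeq M w (k + 1)) :
    ∀ k, ∃ T, IsSweepTime (M.Sp · w) (M.marksp · w) T ∧
      posSeq M w k = ENNReal.ofReal (M.Sp T w)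
  | 0 => ⟨0, hG.isSweepTime_zero, by simp [posSeq, M.hSp0]⟩
  | k + 1 => by
    classical
    obtain ⟨T, hT, hk⟩ := hG.exists_isSweepTime H k
    set r := nextPoint (M.X w) (partialSups (M.Sp · w) T)
    have hr := hG.isLeast_nextPoint (partialSups (M.Sp · w) T)
    have hr0 : 0 < r := (partialSups_Sp_nonneg hT).trans_lt hr.1.2
    have hsucc := hG.posSeq_succ_eq hT hk
    have hex : ∃ n, M.marksp (n + 1) w r = 0 := by
      by_contra! hne
      have htop : TRtime M w r = ⊤ := by
        rw [TRtime, sInf_eq_top]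
        rintro _ ⟨n, hn, rfl⟩
        exact absurd hn (hne n)
      have hle := H k
      rw [LSeq, if_pos (hsucc ▸ ENNReal.ofReal_lt_top), hsucc, ENNReal.toReal_ofReal hr0.le,
        LGap, if_neg (by simp [htop])] at hle
      exact ENNReal.ofReal_ne_top (top_le_iff.1 hle)
    have hs := hG.walkp.eq_find_of_marks ((one_le_marksp_zero_iff hr0).2 hr.1.1) hex
    have hTT' : T < Nat.find hex := by
      by_contra! h
      exact (hr.1.2.trans_le (hs ▸ le_partialSups_of_le (M.Sp · w) h)).false
    refine ⟨Nat.find hex, hT.next hG.walkp marksp_zero_le_two ?_ hTT' hs (Nat.find_spec hex),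
      hsucc.trans (by rw [hs])⟩
    rwa [marked_inter_Ioi (partialSups_Sp_nonneg hT)]

theorem exists_lt_posSeq_toReal (hG : M.IsGood w)
    (H : ∀ k, LSeq M w (k + 1) ≤ posSeq M w (k + 1)) (B : ℝ) :
    ∃ k, B < (posSeq M w k).toReal := by
  have hsucc : ∀ k, ∃ T, (posSeq M w k).toReal = M.Sp T w ∧
      (posSeq M w (k + 1)).toReal = nextPoint (M.X w) (partialSups (M.Sp · w) T) := fun k => by
    obtain ⟨T, hT, hk⟩ := hG.exists_isSweepTime H k
    refine ⟨T, by rw [hk, ENNReal.toReal_ofReal (Sp_nonneg hT)], ?_⟩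
    rw [hG.posSeq_succ_eq hT hk,
      ENNReal.toReal_ofReal ((Sp_nonneg hT).trans (hG.Sp_lt_nextPoint T).le)]
  refine StrictMono.exists_gt_of_mem hG.finite_inter_Icc
    (strictMono_nat_of_lt_succ fun k => ?_) (fun k => ?_) B
  · obtain ⟨T, hk, hk'⟩ := hsucc k
    rw [hk, hk']
    exact hG.Sp_lt_nextPoint T
  · rcases k with _ | k
    · simpa [posSeq] using M.h0X w
    · obtain ⟨T, -, hk'⟩ := hsucc k
      rw [hk']
      exact (hG.isLeast_nextPoint _).1.1

theorem exists_cleared_window (hG : M.IsGood w) (h0Y : (0 : ℝ) ∈ M.Y w)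
    (hS1 : M.S 0 1 w = nthPoint (M.X w) 1) (hret : ∃ n, 1 ≤ n ∧ M.S 0 n w = 0) :
    ∃ m, 1 ≤ m ∧ 0 < M.Sp m w ∧
      ∀ z, 0 < z → z ≤ 2 * M.Sp m w → z ≠ M.Sp m w → M.marksp m w z = 0 :=
  hG.walk.exists_cleared_window hG.walkp (M.hS0 w 0 (M.h0X w)) (M.hSp0 w)
    (fun _ hz => marks_zero_eq_marksp_zero hz) (marks_zero_zero h0Y) marksp_zero_zero
    (fun _ => marksp_zero_of_neg) (by rw [hS1]; exact (hG.isLeast_nextPoint 0).1.2) hret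

/-- A renewal position beyond `Sp m` would be at most `2 Sp m` (as `L_{k+1} ≤ L₀ + ⋯ + L_k`),
hence already cleared at time `m`, which is impossible for a sweep point. -/
theorem posSeq_toReal_le (hG : M.IsGood w) (H : ∀ k, LSeq M w (k + 1) ≤ posSeq M w (k + 1))
    (hm : 1 ≤ m) (hpos : 0 < M.Sp m w)
    (hwin : ∀ z, 0 < z → z ≤ 2 * M.Sp m w → z ≠ M.Sp m w → M.marksp m w z = 0) :
    ∀ k, (posSeq M w (k + 1)).toReal ≤ M.Sp m w
  | 0 => by
    obtain ⟨T, hT, h0⟩ := hG.exists_isSweepTime H 0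
    have hT0 : T = 0 := by
      by_contra hT0
      have := hG.walkp.pos_of_marks_zero (M.hSp0 w) marksp_zero_zero
        (fun _ => marksp_zero_of_neg) (Nat.one_le_iff_ne_zero.2 hT0)
      rw [posSeq, eq_comm, ENNReal.ofReal_eq_zero] at h0
      linarith
    subst hT0
    rw [hG.posSeq_succ_eq hT h0,
      ENNReal.toReal_ofReal ((Sp_nonneg hT).trans (hG.Sp_lt_nextPoint 0).le),
      partialSups_zero, M.hSp0]
    exact (hG.isLeast_nextPoint 0).2
      ⟨(one_le_marksp_zero_iff hpos).1 (hG.walkp.one_le_marks_zero (hG.one_le_marksp_self m)),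
        hpos⟩
  | k + 1 => by
    obtain ⟨T, hT, hk⟩ := hG.exists_isSweepTime H (k + 1)
    obtain ⟨T', hT', hk'⟩ := hG.exists_isSweepTime H (k + 2)
    have hnext : M.Sp T' w = nextPoint (M.X w) (partialSups (M.Sp · w) T) :=
      (ENNReal.ofReal_eq_ofReal_iff (Sp_nonneg hT')
        ((Sp_nonneg hT).trans (hG.Sp_lt_nextPoint T).le)).1
        (hk'.symm.trans (hG.posSeq_succ_eq hT hk))
    have hratio : M.Sp T' w ≤ 2 * M.Sp T w := by
      have h := H k
      rw [hG.LSeq_eq hT hk, hk, ENNReal.ofReal_le_ofReal_iff (Sp_nonneg hT)] at h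
      linarith
    have hle : M.Sp T w ≤ M.Sp m w := by
      simpa [hk, ENNReal.toReal_ofReal (Sp_nonneg hT)] using posSeq_toReal_le hG H hm hpos hwin k
    rw [hk', ENNReal.toReal_ofReal (Sp_nonneg hT')]
    by_cases heq : M.Sp T' w = M.Sp m w
    · exact heq.le
    refine hT'.le_of_marks_eq_zero hG.walkp (hG.one_le_marksp_self 0) hm
      (hwin _ ?_ (by linarith) heq)
    rw [hnext]
    exact (partialSups_Sp_nonneg hT).trans_lt (hG.isLeast_nextPoint _).1.2

end IsGood

end GreedyModel

/-- `ℙ¹`-almost surely, on the event `[ω(0) = 2 and S₁ = X₁]`, if the greedy walk on the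
full configuration `ω` returns to the origin then `L_{k+1} > L₀ + L₁ + ⋯ + L_k` for
some `k ≥ 0`. -/
theorem return_to_origin_implies_exceptional_renewal (M : GreedyModel) :
    ∀ᵐ ωs ∂M.P, (0 : ℝ) ∈ M.Y ωs → M.S 0 1 ωs = nthPoint (M.X ωs) 1 →
      (∃ n : ℕ, 1 ≤ n ∧ M.S 0 n ωs = 0) →
      ∃ k : ℕ, posSeq M ωs (k + 1) < LSeq M ωs (k + 1) := by
  filter_upwards [M.ae_isGood] with ωs hG h0Y hS1 hret
  by_contra! H
  obtain ⟨m, hm, hpos, hwin⟩ := hG.exists_cleared_window h0Y hS1 hret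
  obtain ⟨_ | k, hk⟩ := hG.exists_lt_posSeq_toReal H (M.Sp m ωs)
  · simp only [posSeq, ENNReal.toReal_zero] at hk
    linarith
  · exact (hG.posSeq_toReal_le H hm hpos hwin k).not_gt hk

end
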